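/- arXiv:2507.08631 — 4 statements merged into one kernel-verified Lean document; each statement's English description precedes it below -/
import Mathlib

section
/- Let n ≥ 5 be an integer. Then the minimum over α ∈ [0,∞) of the function g(α) = (16 + 8(1 + 2/n)α + 3α²)/(4 + 3α) equals (8/3)(√(2 − 4/n) + 2/n). -/
open Real

/-!
With `t = 2/n` and `s = √(2 - 2t)`, the relation `s² = 2 - 2t` turns
`3 g(α) (4 + 3α) - 8 (s + t)(4 + 3α)` into the perfect square `(4 + 3α - 4s)²`.
Hence `g ≥ (8/3)(s + t)` on `[0, ∞)`, with equality at `α = 4(s - 1)/3`, which is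
nonnegative because `t ≤ 1/2` for `n ≥ 4`.
-/

/-- The function `g` of the statement with `2/n` replaced by a real parameter `t`. -/
noncomputable def alphaQuotient (t α : ℝ) : ℝ :=
  (16 + 8 * (1 + t) * α + 3 * α ^ 2) / (4 + 3 * α)

section

variable {t s : ℝ}

lemma alphaQuotient_numerator_eq (hs : s ^ 2 = 2 - 2 * t) (α : ℝ) :
    3 * (16 + 8 * (1 + t) * α + 3 * α ^ 2) - 8 * (s + t) * (4 + 3 * α)
      = (4 + 3 * α - 4 * s) ^ 2 := by
  linear_combination (-16 : ℝ) * hs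

lemma le_alphaQuotient (hs : s ^ 2 = 2 - 2 * t) {α : ℝ} (hα : 0 ≤ α) :
    8 / 3 * (s + t) ≤ alphaQuotient t α := by
  rw [alphaQuotient, le_div_iff₀ (by linarith)]
  nlinarith [alphaQuotient_numerator_eq hs α, sq_nonneg (4 + 3 * α - 4 * s)]

lemma alphaQuotient_four_mul_sub_one_div_three (hs : s ^ 2 = 2 - 2 * t) (hs1 : 1 ≤ s) :
    alphaQuotient t (4 * (s - 1) / 3) = 8 / 3 * (s + t) := by
  have hden : 4 + 3 * (4 * (s - 1) / 3) = 4 * s := by ring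
  rw [alphaQuotient, hden, div_eq_iff (by positivity)]
  linear_combination (-16 / 3 : ℝ) * hs

theorem isLeast_alphaQuotient (hs : s ^ 2 = 2 - 2 * t) (hs1 : 1 ≤ s) :
    IsLeast (alphaQuotient t '' Set.Ici 0) (8 / 3 * (s + t)) :=
  ⟨⟨4 * (s - 1) / 3, by simp only [Set.mem_Ici]; linarith, alphaQuotient_four_mul_sub_one_div_three hs hs1⟩,
    by rintro _ ⟨α, hα, rfl⟩; exact le_alphaQuotient hs hα⟩

end

/-- For an integer `n ≥ 5`, the minimum over `α ∈ [0,∞)` of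
`g(α) = (16 + 8(1 + 2/n)α + 3α²)/(4 + 3α)` equals `(8/3)(√(2 − 4/n) + 2/n)`. -/
theorem min_of_alpha_quotient (n : ℕ) (hn : 5 ≤ n) :
    IsLeast ((fun α : ℝ => (16 + 8 * (1 + 2 / (n : ℝ)) * α + 3 * α ^ 2) / (4 + 3 * α)) ''
        Set.Ici 0)
      (8 / 3 * (Real.sqrt (2 - 4 / (n : ℝ)) + 2 / (n : ℝ))) := by
  have hn : (4 : ℝ) ≤ n := by exact_mod_cast (by omega : 4 ≤ n)
  have h4n : 4 / (n : ℝ) ≤ 1 := (div_le_one (by linarith)).2 hn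
  have hsq : √(2 - 4 / (n : ℝ)) ^ 2 = 2 - 2 * (2 / n) := by
    rw [sq_sqrt (by linarith)]; ring
  have hs1 : 1 ≤ √(2 - 4 / (n : ℝ)) := one_le_sqrt.2 (by linarith)
  exact isLeast_alphaQuotient hsq hs1
end

section
/- Define f : (0,∞) → ℝ by f(t) = 2(cos(√t · π) − 1) + √t · π · sin(√t · π). Then f(4) = 0 and f(t) ≠ 0 for every t ∈ (0,4); that is, t = 4 is the smallest positive solution of 2(cos(√t π) − 1) + √t π sin(√t π) = 0. -/
open Real

/-- `t = 4` is the smallest positive solution of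
`2(cos(√t π) − 1) + √t π sin(√t π) = 0`: the function
`f(t) = 2(cos(√t π) − 1) + √t π sin(√t π)` vanishes at `t = 4` and is nonzero on `(0,4)`. -/
theorem smallest_root_strip_equation :
    (2 * (Real.cos (Real.sqrt 4 * π) - 1) + Real.sqrt 4 * π * Real.sin (Real.sqrt 4 * π) = 0) ∧
    ∀ t : ℝ, 0 < t → t < 4 →
      2 * (Real.cos (Real.sqrt t * π) - 1) + Real.sqrt t * π * Real.sin (Real.sqrt t * π) ≠ 0 := by
  have h4 : Real.sqrt 4 = 2 := by
    rw [show (4:ℝ) = 2^2 by norm_num, Real.sqrt_sq (by norm_num : (0:ℝ) ≤ 2)]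
  constructor
  · rw [h4, Real.cos_two_pi, Real.sin_two_pi]; ring
  · intro t ht ht4
    set u : ℝ := Real.sqrt t * π / 2 with hu
    have hst : 0 < Real.sqrt t := Real.sqrt_pos.mpr ht
    have hst2 : Real.sqrt t < 2 := by
      calc Real.sqrt t < Real.sqrt 4 := Real.sqrt_lt_sqrt ht.le ht4
        _ = 2 := h4
    have hu0 : 0 < u := by positivity
    have huπ : u < π := by
      have : Real.sqrt t * π < 2 * π := by
        exact mul_lt_mul_of_pos_right hst2 Real.pi_pos
      linarith
    have hsin : 0 < Real.sin u := Real.sin_pos_of_pos_of_lt_pi hu0 huπ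
    have h2u : Real.sqrt t * π = 2 * u := by rw [hu]; ring
    have hkey : u * Real.cos u - Real.sin u < 0 := by
      rcases lt_or_ge u (π / 2) with hlt | hge
      · have hcos : 0 < Real.cos u := Real.cos_pos_of_mem_Ioo ⟨by linarith, hlt⟩
        have htan : u < Real.tan u := Real.lt_tan hu0 hlt
        have : u * Real.cos u < Real.tan u * Real.cos u :=
          mul_lt_mul_of_pos_right htan hcos
        rw [Real.tan_eq_sin_div_cos, div_mul_cancel₀ _ hcos.ne'] at this
        linarith
      · have hcos : Real.cos u ≤ 0 :=
          Real.cos_nonpos_of_pi_div_two_le_of_le hge (by linarith [Real.pi_pos])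
        nlinarith
    rw [h2u, Real.cos_two_mul, Real.sin_two_mul]
    have hsin2 : Real.sin u ^ 2 = 1 - Real.cos u ^ 2 := by
      nlinarith [Real.sin_sq_add_cos_sq u]
    nlinarith [mul_pos hsin (neg_pos.mpr hkey)]
end

section
/- Let Λ > 0. There exists a function w : ℝ → ℝ of class C⁴, not identically zero on [0,π], satisfying w''''(y) = −Λ w''(y) for all y ∈ (0,π) together with the boundary conditions w(0) = w(π) = 0 and w'(0) = w'(π) = 0, if and only if 2(cos(√Λ π) − 1) + √Λ π sin(√Λ π) = 0. -/
/-!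
Two `C⁴` solutions of `w'''' = -Λ w''` (`Λ ≥ 0`) with the same data `w, w', w'', w'''` at `0`
coincide: for the second derivative `g` of their difference the energy `(g')² + Λ g²` is
conserved, hence zero, and integrating back shows that the difference vanishes. So, with
`μ = √Λ`, every solution with `w(0) = w'(0) = 0` is `C (cos μy - 1) + D (sin μy - μy)`, and the
conditions `w(π) = w'(π) = 0` form a linear system in `(C, D)` whose determinant is, up to sign,
`2 (cos μπ - 1) + μπ sin μπ`.
-/

open Real Set Filter Topology

theorem ContDiff.hasDerivAt_iterate_deriv {f : ℝ → ℝ} {n k : ℕ} (hf : ContDiff ℝ n f)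
    (hk : k < n) (y : ℝ) : HasDerivAt (deriv^[k] f) (deriv^[k + 1] f y) y := by
  have h : ContDiff ℝ (1 + k : ℕ) f := hf.of_le (by exact_mod_cast (by omega : 1 + k ≤ n))
  rw [Function.iterate_succ_apply']
  exact ((h.iterate_deriv' 1 k).differentiable one_ne_zero y).hasDerivAt

theorem ContDiff.continuous_iterate_deriv {f : ℝ → ℝ} {n k : ℕ} (hf : ContDiff ℝ n f)
    (hk : k ≤ n) : Continuous (deriv^[k] f) :=
  ((hf.of_le (by exact_mod_cast (by omega : 0 + k ≤ n))).iterate_deriv' 0 k).continuous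

theorem eqOn_Icc_of_hasDerivAt {f g f' g' : ℝ → ℝ} {a b : ℝ}
    (hf : ∀ y ∈ Icc a b, HasDerivAt f (f' y) y) (hg : ∀ y ∈ Icc a b, HasDerivAt g (g' y) y)
    (hfg' : EqOn f' g' (Icc a b)) (ha : f a = g a) : EqOn f g (Icc a b) :=
  fun y hy => eq_of_has_deriv_right_eq
    (fun x hx => (hf x (Ico_subset_Icc_self hx)).hasDerivWithinAt)
    (fun x hx => hfg' (Ico_subset_Icc_self hx) ▸ (hg x (Ico_subset_Icc_self hx)).hasDerivWithinAt)
    (fun x hx => (hf x hx).continuousAt.continuousWithinAt)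
    (fun x hx => (hg x hx).continuousAt.continuousWithinAt) ha y hy

def BucklingEqOn (Λ : ℝ) (s : Set ℝ) (w : ℝ → ℝ) : Prop :=
  ∀ y ∈ s, deriv^[4] w y = -Λ * deriv^[2] w y

theorem BucklingEqOn.Icc_of_Ioo {Λ a b : ℝ} {w : ℝ → ℝ} (hab : a < b) (hw : ContDiff ℝ 4 w)
    (h : BucklingEqOn Λ (Ioo a b) w) : BucklingEqOn Λ (Icc a b) w :=
  EqOn.of_subset_closure h (hw.continuous_iterate_deriv le_rfl).continuousOn
    (continuous_const.mul (hw.continuous_iterate_deriv (by norm_num))).continuousOn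
    Ioo_subset_Icc_self (closure_Ioo hab.ne).ge

theorem BucklingEqOn.eqOn {u v : ℝ → ℝ} {Λ a b : ℝ} (hΛ : 0 ≤ Λ)
    (hu : ContDiff ℝ 4 u) (hv : ContDiff ℝ 4 v)
    (hu_ode : BucklingEqOn Λ (Icc a b) u) (hv_ode : BucklingEqOn Λ (Icc a b) v)
    (hinit : ∀ k < 4, deriv^[k] u a = deriv^[k] v a) :
    EqOn u v (Icc a b) ∧ EqOn (deriv u) (deriv v) (Icc a b) := by
  have hdu (k : ℕ) (hk : k < 4) := hu.hasDerivAt_iterate_deriv hk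
  have hdv (k : ℕ) (hk : k < 4) := hv.hasDerivAt_iterate_deriv hk
  have henergy : EqOn (fun y => (deriv^[3] u y - deriv^[3] v y) ^ 2 +
      Λ * (deriv^[2] u y - deriv^[2] v y) ^ 2) 0 (Icc a b) := by
    refine eqOn_Icc_of_hasDerivAt (f' := 0) (g' := 0) (fun y hy => ?_)
      (fun y _ => hasDerivAt_const y 0) (fun _ _ => rfl) (by simp [hinit 2, hinit 3])
    have h := (((hdu 3 (by norm_num) y).sub (hdv 3 (by norm_num) y)).pow 2).add
      ((((hdu 2 (by norm_num) y).sub (hdv 2 (by norm_num) y)).pow 2).const_mul Λ)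
    refine h.congr_deriv ?_
    simp only [Pi.zero_apply, Pi.sub_apply, Nat.reduceAdd, hu_ode y hy, hv_ode y hy]
    ring
  have h3 : EqOn (deriv^[3] u) (deriv^[3] v) (Icc a b) := fun y hy => by
    have h := henergy hy
    simp only [Pi.zero_apply] at h
    nlinarith [sq_nonneg (deriv^[3] u y - deriv^[3] v y),
      mul_nonneg hΛ (sq_nonneg (deriv^[2] u y - deriv^[2] v y))]
  have h2 := eqOn_Icc_of_hasDerivAt (fun y _ => hdu 2 (by norm_num) y)
    (fun y _ => hdv 2 (by norm_num) y) h3 (hinit 2 (by norm_num))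
  have h1 := eqOn_Icc_of_hasDerivAt (fun y _ => hdu 1 (by norm_num) y)
    (fun y _ => hdv 1 (by norm_num) y) h2 (hinit 1 (by norm_num))
  exact ⟨eqOn_Icc_of_hasDerivAt (fun y _ => hdu 0 (by norm_num) y)
    (fun y _ => hdv 0 (by norm_num) y) h1 (hinit 0 (by norm_num)), h1⟩

noncomputable def affineTrig (μ A B C D : ℝ) (y : ℝ) : ℝ :=
  A + B * y + C * cos (μ * y) + D * sin (μ * y)

theorem hasDerivAt_affineTrig (μ A B C D y : ℝ) :
    HasDerivAt (affineTrig μ A B C D) (affineTrig μ B 0 (μ * D) (-(μ * C)) y) y := by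
  have hμy := (hasDerivAt_id' y).const_mul μ
  have h := ((((hasDerivAt_id' y).const_mul B).const_add A).add (hμy.cos.const_mul C)).add
    (hμy.sin.const_mul D)
  exact h.congr_deriv (by simp only [affineTrig]; ring)

theorem deriv_affineTrig (μ A B C D : ℝ) :
    deriv (affineTrig μ A B C D) = affineTrig μ B 0 (μ * D) (-(μ * C)) :=
  funext fun y => (hasDerivAt_affineTrig μ A B C D y).deriv

theorem contDiff_affineTrig (μ A B C D : ℝ) {n : WithTop ℕ∞} :
    ContDiff ℝ n (affineTrig μ A B C D) := by
  unfold affineTrig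
  fun_prop

theorem bucklingEqOn_affineTrig (μ A B C D : ℝ) (s : Set ℝ) :
    BucklingEqOn (μ ^ 2) s (affineTrig μ A B C D) := by
  intro y _
  simp only [Function.iterate_succ, Function.iterate_zero, Function.comp_apply, id,
    deriv_affineTrig, affineTrig]
  ring

theorem eq_zero_of_affineTrig_eqOn_zero {μ A B C D : ℝ} {s : Set ℝ} (hμ : μ ≠ 0)
    (hs : (interior s).Nonempty) (h : EqOn (affineTrig μ A B C D) 0 s) : C = 0 ∧ D = 0 := by
  obtain ⟨x, hx⟩ := hs
  have hev : affineTrig μ A B C D =ᶠ[𝓝 x] 0 := eventually_of_mem (mem_interior_iff_mem_nhds.1 hx) h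
  have h2 := hev.iteratedDeriv_eq 2
  have h3 := hev.iteratedDeriv_eq 3
  simp only [iteratedDeriv_eq_iterate, Function.iterate_succ, Function.iterate_zero,
    Function.comp_apply, id, deriv_affineTrig, affineTrig, Pi.zero_def, deriv_const'] at h2 h3
  have hP : C * cos (μ * x) + D * sin (μ * x) = 0 := by
    refine (mul_eq_zero.1 ?_).resolve_left (pow_ne_zero 2 hμ)
    linear_combination -h2
  have hQ : C * sin (μ * x) - D * cos (μ * x) = 0 := by
    refine (mul_eq_zero.1 ?_).resolve_left (pow_ne_zero 3 hμ)
    linear_combination h3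
  have hpyth := sin_sq_add_cos_sq (μ * x)
  constructor
  · linear_combination cos (μ * x) * hP + sin (μ * x) * hQ - C * hpyth
  · linear_combination sin (μ * x) * hP - cos (μ * x) * hQ - D * hpyth

noncomputable def clampedMode (μ C D : ℝ) : ℝ → ℝ :=
  affineTrig μ (-C) (-(μ * D)) C D

theorem clampedMode_apply (μ C D y : ℝ) :
    clampedMode μ C D y = C * (cos (μ * y) - 1) + D * (sin (μ * y) - μ * y) := by
  simp only [clampedMode, affineTrig]
  ring

theorem deriv_clampedMode_apply (μ C D y : ℝ) :
    deriv (clampedMode μ C D) y = μ * (D * (cos (μ * y) - 1) - C * sin (μ * y)) := by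
  simp only [clampedMode, deriv_affineTrig, affineTrig]
  ring

theorem exists_eqOn_clampedMode {w : ℝ → ℝ} {μ b : ℝ} (hμ : μ ≠ 0) (hw : ContDiff ℝ 4 w)
    (hode : BucklingEqOn (μ ^ 2) (Icc 0 b) w) (h0 : w 0 = 0) (hd0 : deriv w 0 = 0) :
    ∃ C D, EqOn w (clampedMode μ C D) (Icc 0 b) ∧
      EqOn (deriv w) (deriv (clampedMode μ C D)) (Icc 0 b) := by
  refine ⟨-deriv^[2] w 0 / μ ^ 2, -deriv^[3] w 0 / μ ^ 3,
    hode.eqOn (sq_nonneg μ) hw (contDiff_affineTrig ..) (bucklingEqOn_affineTrig _ _ _ _ _ _) ?_⟩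
  intro k hk
  interval_cases k <;>
    simp only [Function.iterate_succ, Function.iterate_zero, Function.comp_apply, id, h0, hd0,
      clampedMode, deriv_affineTrig, affineTrig, mul_zero, cos_zero, sin_zero] <;>
    field_simp <;> ring

theorem clampedMode_coeffs_eq_zero {μ L C D : ℝ} (hμ : μ ≠ 0)
    (hΔ : 2 * (cos (μ * L) - 1) + μ * L * sin (μ * L) ≠ 0)
    (hL : clampedMode μ C D L = 0) (hdL : deriv (clampedMode μ C D) L = 0) : C = 0 ∧ D = 0 := by
  rw [clampedMode_apply] at hL
  rw [deriv_clampedMode_apply, mul_eq_zero, or_iff_right hμ] at hdL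
  have hpyth := sin_sq_add_cos_sq (μ * L)
  have hC : C * (2 * (cos (μ * L) - 1) + μ * L * sin (μ * L)) = 0 := by
    linear_combination (1 - cos (μ * L)) * hL + (sin (μ * L) - μ * L) * hdL + C * hpyth
  have hD : D * (2 * (cos (μ * L) - 1) + μ * L * sin (μ * L)) = 0 := by
    linear_combination (-sin (μ * L)) * hL + (1 - cos (μ * L)) * hdL + D * hpyth
  exact ⟨(mul_eq_zero.1 hC).resolve_right hΔ, (mul_eq_zero.1 hD).resolve_right hΔ⟩

theorem exists_clampedMode_boundary {μ L : ℝ} (hμL : 0 < μ * L)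
    (hΔ : 2 * (cos (μ * L) - 1) + μ * L * sin (μ * L) = 0) :
    ∃ C D, C ≠ 0 ∧ clampedMode μ C D L = 0 ∧ deriv (clampedMode μ C D) L = 0 := by
  -- a kernel vector of the singular boundary system; `C ≠ 0` since `sin t < t` for `t > 0`
  refine ⟨sin (μ * L) - μ * L, 1 - cos (μ * L), (sub_neg.2 (sin_lt hμL)).ne, ?_, ?_⟩
  · rw [clampedMode_apply]
    ring
  · rw [deriv_clampedMode_apply]
    linear_combination μ * hΔ - μ * sin_sq_add_cos_sq (μ * L)

/-- For `Λ > 0`, there exists a `C⁴` function `w : ℝ → ℝ`, not identically zero on `[0,π]`,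
with `w'''' = −Λ w''` on `(0,π)` and `w(0) = w(π) = w'(0) = w'(π) = 0`, if and only if
`2(cos(√Λ π) − 1) + √Λ π sin(√Λ π) = 0`. -/
theorem clamped_ode_solvability (Λ : ℝ) (hΛ : 0 < Λ) :
    (∃ w : ℝ → ℝ, ContDiff ℝ 4 w ∧ (∃ y ∈ Set.Icc (0 : ℝ) π, w y ≠ 0) ∧
      (∀ y ∈ Set.Ioo (0 : ℝ) π, deriv^[4] w y = -Λ * deriv^[2] w y) ∧
      w 0 = 0 ∧ w π = 0 ∧ deriv w 0 = 0 ∧ deriv w π = 0) ↔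
    2 * (Real.cos (Real.sqrt Λ * π) - 1) +
        Real.sqrt Λ * π * Real.sin (Real.sqrt Λ * π) = 0 := by
  obtain ⟨μ, hμ, rfl⟩ : ∃ μ, 0 < μ ∧ μ ^ 2 = Λ := ⟨√Λ, sqrt_pos.2 hΛ, sq_sqrt hΛ.le⟩
  rw [sqrt_sq hμ.le]
  have hπ : π ∈ Icc 0 π := right_mem_Icc.2 pi_pos.le
  constructor
  · rintro ⟨w, hw, ⟨y₀, hy₀, hwy₀⟩, hode, h0, hwπ, hd0, hdπ⟩
    by_contra hΔ
    obtain ⟨C, D, hwC, hdwC⟩ :=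
      exists_eqOn_clampedMode hμ.ne' hw (BucklingEqOn.Icc_of_Ioo pi_pos hw hode) h0 hd0
    obtain ⟨rfl, rfl⟩ := clampedMode_coeffs_eq_zero hμ.ne' hΔ ((hwC hπ).symm.trans hwπ)
      ((hdwC hπ).symm.trans hdπ)
    exact hwy₀ (by rw [hwC hy₀, clampedMode_apply]; ring)
  · intro hΔ
    obtain ⟨C, D, hC, hL, hdL⟩ := exists_clampedMode_boundary (by positivity) hΔ
    refine ⟨clampedMode μ C D, contDiff_affineTrig .., ?_, bucklingEqOn_affineTrig _ _ _ _ _ _,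
      by simp [clampedMode_apply], hL, by simp [deriv_clampedMode_apply], hdL⟩
    by_contra! hzero
    exact hC (eq_zero_of_affineTrig_eqOn_zero hμ.ne' (by simp [pi_pos]) hzero).1
end

section
/- Let μ > 0, Λ ∈ ℝ, and let h : ℝ → ℝ be of class C⁴. Define w : ℝ² → ℝ by w(x,y) = h(y)·cos(√μ · x). Then w satisfies Δ²w(x,y) = −Λ Δw(x,y) for all (x,y) ∈ ℝ² if and only if h satisfies (h'' − μh)''(y) = −(Λ − μ)(h''(y) − μh(y)) for all y ∈ ℝ, where Δ is the Laplacian on ℝ² and Δ² the bilaplacian. -/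
open Real

/-- The Laplacian of `u : ℝⁿ → ℝ` at `x`, as the trace of the second derivative. -/
noncomputable def lapl {n : ℕ} (u : EuclideanSpace ℝ (Fin n) → ℝ)
    (x : EuclideanSpace ℝ (Fin n)) : ℝ :=
  ∑ i : Fin n, iteratedFDeriv ℝ 2 u x ![EuclideanSpace.single i (1:ℝ), EuclideanSpace.single i 1]

/-!
`cos (√μ x)` is an eigenfunction of `∂²/∂x²` with eigenvalue `-μ`, so the Laplacian maps
`h(y) cos(√μ x)` to `(h'' - μ h)(y) cos(√μ x)`, a function of the same separated form. Applying
this twice, `Δ²w + Λ Δw = (F'' - (Λ - μ) F)(y) cos(√μ x)` with `F = h'' - μ h`, and since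
`cos 0 = 1` this vanishes identically iff the ODE for `F` holds. The second partial derivatives
are computed by restricting to coordinate lines.
-/

theorem iteratedDeriv_comp_add_smul {𝕜 E F : Type*} [NontriviallyNormedField 𝕜]
    [NormedAddCommGroup E] [NormedSpace 𝕜 E] [NormedAddCommGroup F] [NormedSpace 𝕜 F]
    {n : ℕ} {u : E → F} (hu : ContDiff 𝕜 n u) (x v : E) :
    iteratedDeriv n (fun t : 𝕜 => u (x + t • v)) 0 = iteratedFDeriv 𝕜 n u x (fun _ => v) := by
  have hcomp : (fun t : 𝕜 => u (x + t • v)) =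
      (fun z => u (x + z)) ∘ ContinuousLinearMap.smulRight (1 : 𝕜 →L[𝕜] 𝕜) v := by
    ext t; simp
  have hshift : ContDiff 𝕜 n (fun z => u (x + z)) := hu.comp (contDiff_const.add contDiff_id)
  rw [iteratedDeriv_eq_iteratedFDeriv, hcomp,
    ContinuousLinearMap.iteratedFDeriv_comp_right _ hshift _ le_rfl]
  simp [iteratedFDeriv_comp_add_left]

theorem lapl_fin_two_separated {f g : ℝ → ℝ} (hf : ContDiff ℝ 2 f) (hg : ContDiff ℝ 2 g)
    (p : EuclideanSpace ℝ (Fin 2)) :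
    lapl (fun q : EuclideanSpace ℝ (Fin 2) => f (q 1) * g (q 0)) p =
      f (p 1) * deriv^[2] g (p 0) + deriv^[2] f (p 1) * g (p 0) := by
  have hu : ContDiff ℝ 2 (fun q : EuclideanSpace ℝ (Fin 2) => f (q 1) * g (q 0)) :=
    (hf.comp (EuclideanSpace.proj (1 : Fin 2)).contDiff).mul
      (hg.comp (EuclideanSpace.proj (0 : Fin 2)).contDiff)
  have hdiag : ∀ v : EuclideanSpace ℝ (Fin 2), ![v, v] = fun _ => v := fun v => by
    ext i : 1; fin_cases i <;> rfl
  simp only [lapl, Fin.sum_univ_two, hdiag, ← iteratedDeriv_comp_add_smul hu,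
    ← iteratedDeriv_eq_iterate]
  simp [iteratedDeriv_comp_const_add]

theorem iter_deriv_two_cos_const_mul (a : ℝ) :
    deriv^[2] (fun t => cos (a * t)) = fun t => -(a ^ 2 * cos (a * t)) := by
  rw [← iteratedDeriv_eq_iterate, iteratedDeriv_comp_const_mul contDiff_cos]
  simp [iteratedDeriv_succ]

theorem lapl_mul_cos {f : ℝ → ℝ} (hf : ContDiff ℝ 2 f) (a : ℝ) :
    lapl (fun q : EuclideanSpace ℝ (Fin 2) => f (q 1) * cos (a * q 0)) =
      fun p => (deriv^[2] f (p 1) - a ^ 2 * f (p 1)) * cos (a * p 0) := by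
  ext p
  rw [lapl_fin_two_separated (g := fun t => cos (a * t)) hf (by fun_prop),
    iter_deriv_two_cos_const_mul]
  ring

theorem forall_mul_cos_eq_iff (a : ℝ) (A B : ℝ → ℝ) :
    (∀ p : EuclideanSpace ℝ (Fin 2), A (p 1) * cos (a * p 0) = B (p 1) * cos (a * p 0)) ↔
      ∀ y, A y = B y := by
  refine ⟨fun H y => ?_, fun H p => by rw [H]⟩
  simpa using H !₂[0, y]

/-- For `μ > 0` and a `C⁴` function `h`, the separated function `w(x,y) = h(y)cos(√μ x)`
satisfies `Δ²w = −Λ Δw` on `ℝ²` if and only if `h` satisfies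
`(h'' − μh)'' = −(Λ − μ)(h'' − μh)` on `ℝ`. -/
theorem separation_of_variables (μ : ℝ) (hμ : 0 < μ) (Λ : ℝ) (h : ℝ → ℝ)
    (hh : ContDiff ℝ 4 h) :
    (∀ p : EuclideanSpace ℝ (Fin 2),
        lapl (lapl fun q : EuclideanSpace ℝ (Fin 2) => h (q 1) * Real.cos (Real.sqrt μ * q 0))
            p =
          -Λ * lapl (fun q : EuclideanSpace ℝ (Fin 2) =>
            h (q 1) * Real.cos (Real.sqrt μ * q 0)) p) ↔
    (∀ y : ℝ, deriv^[2] (fun t => deriv^[2] h t - μ * h t) y =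
        -(Λ - μ) * (deriv^[2] h y - μ * h y)) := by
  have hh2 : ContDiff ℝ 2 h := hh.of_le (by norm_num)
  have hF : ContDiff ℝ 2 (fun t => deriv^[2] h t - μ * h t) :=
    (hh.iterate_deriv' 2 2).sub (contDiff_const.mul hh2)
  have hsq : √μ ^ 2 = μ := sq_sqrt hμ.le
  rw [lapl_mul_cos hh2, hsq, lapl_mul_cos hF, hsq]
  simp only [← mul_assoc]
  refine (forall_mul_cos_eq_iff (√μ)
    (fun y => deriv^[2] (fun t => deriv^[2] h t - μ * h t) y - μ * (deriv^[2] h y - μ * h y))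
    (fun y => -Λ * (deriv^[2] h y - μ * h y))).trans (forall_congr' fun y => ?_)
  constructor <;> intro <;> linarith
end
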